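/- Let A be an affine hyperplane arrangement in K^d and let cA be its cone in K^{d+1} with additional hyperplane K : y = 0. Then cA is supersolvable with a maximal modular chain passing through K if and only if A admits a maximal saturated chain of modular subarrangements ∅ = A_0 ⊊ A_1 ⊊ A_2 ⊊ ··· ⊊ A_r = A, where r = r(A) and each A_i is a modular subarrangement of A with r(L(A_i)) = i. -/

import Mathlib

/-!
The flats of the cone `cA` are of two kinds: cones `cX` over flats `X` of `A`, and flats
`U × {0}` inside the hyperplane `K : y = 0`, where `U` is an intersection of directions of
hyperplanes of `A`. A modular chain through `K` begins `V × K > K`, so its later members are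
`Uᵢ × {0}` with `codim Uᵢ = i`. In a central arrangement a flat is modular as soon as it is
rank-additive with every flat sharing no hyperplane with it; hence `U × {0}` is modular in `cA`
iff every flat `Y` of `A` lying in no hyperplane whose direction contains `U` satisfies
`U + dir Y = V`. This transversality is also exactly what makes the hyperplanes whose direction
contains `U` a modular subarrangement: it is condition (I3) for `L(B)` and its meet-complement.
So both chains of the theorem amount to the same flag `U₀ > U₁ > ⋯ > U_r` of such subspaces.
-/

open Polynomial
open scoped Classical Pointwise

namespace HypArr

variable {K V : Type*} [Field K] [AddCommGroup V] [Module K V] [FiniteDimensional K V]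

/-- `A` is an affine hyperplane arrangement: a finite set of affine hyperplanes,
i.e. nonempty affine subspaces of codimension one. -/
def IsArrangement (A : Finset (AffineSubspace K V)) : Prop :=
  ∀ H ∈ A, H ≠ ⊥ ∧ Module.finrank K V = Module.finrank K H.direction + 1

/-- The intersection poset `L(A)`: all nonempty intersections of subfamilies of `A`
(the empty intersection being the whole space `⊤`).  The order of `L(A)` is *reverse*
inclusion, so `X ≤ Y` in `L(A)` corresponds to `Y ≤ X` as affine subspaces; the
minimal element `0̂` of `L(A)` is the whole space `⊤`. -/
noncomputable def poset (A : Finset (AffineSubspace K V)) : Finset (AffineSubspace K V) :=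
  (A.powerset.image fun S => S.inf id).filter (· ≠ ⊥)

/-- The rank of an element of `L(A)`: its codimension in `V`. -/
noncomputable def rk (X : AffineSubspace K V) : ℕ :=
  Module.finrank K V - Module.finrank K X.direction

/-- The rank `r(A)` of the arrangement: the maximal rank of an element of `L(A)`. -/
noncomputable def rank (A : Finset (AffineSubspace K V)) : ℕ := (poset A).sup rk

/-- An ideal of `L(A)` (with respect to the reverse-inclusion order of `L(A)`):
a downward closed subset of `L(A)`. -/
def IsIdeal (A I : Finset (AffineSubspace K V)) : Prop :=
  I ⊆ poset A ∧ ∀ X ∈ I, ∀ Y ∈ poset A, X ≤ Y → Y ∈ I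

/-- The principal ideal `⟨X⟩ = {Y ∈ L(A) : Y ≤ X}` of `L(A)` (in the
reverse-inclusion order of `L(A)`, i.e. `{Y ∈ L(A) : X ⊆ Y}`). -/
noncomputable def principal (A : Finset (AffineSubspace K V)) (X : AffineSubspace K V) :
    Finset (AffineSubspace K V) :=
  (poset A).filter fun Y => X ≤ Y

/-- The meet `X ∧ Y` in `L(A)`: the greatest element of `L(A)` below both `X` and `Y`
(in the reverse-inclusion order); in terms of affine subspaces it is the smallest
element of `L(A)` containing both `X` and `Y`.  In particular `X ∧ Y = 0̂` iff
`lmeet A X Y = ⊤`. -/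
noncomputable def lmeet (A : Finset (AffineSubspace K V)) (X Y : AffineSubspace K V) :
    AffineSubspace K V :=
  sInf {W | W ∈ poset A ∧ X ≤ W ∧ Y ≤ W}

/-- An ideal decomposition `{I_1, …, I_m}` of `L(A)`:
(I1) for every `X ∈ L(A) \ {0̂}` some `I j ∩ ⟨X⟩` is a nontrivial principal ideal;
(I2) joins `X_1 ∨ ⋯ ∨ X_m` (i.e. intersections) of members of the ideals exist;
(I3) these joins satisfy the rank condition. -/
def IsIdealDecomposition (A : Finset (AffineSubspace K V)) {m : ℕ}
    (I : Fin m → Finset (AffineSubspace K V)) : Prop :=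
  (∀ i, IsIdeal A (I i)) ∧
  (∀ X ∈ poset A, X ≠ ⊤ →
    ∃ j, ∃ Z ∈ poset A, Z ≠ ⊤ ∧ I j ∩ principal A X = principal A Z) ∧
  (∀ f : Fin m → AffineSubspace K V, (∀ i, f i ∈ I i) →
    Finset.univ.inf f ≠ (⊥ : AffineSubspace K V)) ∧
  (∀ f : Fin m → AffineSubspace K V, (∀ i, f i ∈ I i) →
    rk (Finset.univ.inf f) = ∑ i, rk (f i))

/-- The meet-complement `I^c = {Y ∈ L(A) : Y ∧ X = 0̂ for all X ∈ I}`. -/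
noncomputable def meetCompl (A I : Finset (AffineSubspace K V)) : Finset (AffineSubspace K V) :=
  (poset A).filter fun Y => ∀ X ∈ I, lmeet A X Y = ⊤

/-- An ideal `I` is modular if `{I, I^c}` is an ideal decomposition of `L(A)`. -/
def IsModularIdeal (A I : Finset (AffineSubspace K V)) : Prop :=
  IsIdealDecomposition A ![I, meetCompl A I]

/-- `μ` is the Möbius function `μ(0̂, ·)` of the finite intersection poset `P`
(ordered by reverse inclusion, with minimal element the maximal affine subspace in `P`):
the sum of `μ` over an interval `[0̂, X]` is `1` if `X = 0̂` and `0` otherwise. -/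
def IsMobiusOn (P : Finset (AffineSubspace K V)) (μ : AffineSubspace K V → ℤ) : Prop :=
  ∀ X ∈ P, ∑ Z ∈ P.filter (fun Z => X ≤ Z), μ Z = if ∀ Z ∈ P, Z ≤ X then 1 else 0

/-- The characteristic polynomial `χ(t) = ∑_{X ∈ P} μ(X) t^{dim X}` of an
intersection poset `P` with Möbius function `μ`. -/
noncomputable def charPolyOn (P : Finset (AffineSubspace K V)) (μ : AffineSubspace K V → ℤ) :
    Polynomial ℤ :=
  ∑ X ∈ P, C (μ X) * Polynomial.X ^ (Module.finrank K X.direction)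

/-- The characteristic polynomial `χ̃(I, t) = ∑_{X ∈ I} μ(X) t^{r(I) - r(X)}` of an ideal. -/
noncomputable def tildeChi (μ : AffineSubspace K V → ℤ) (I : Finset (AffineSubspace K V)) :
    Polynomial ℤ :=
  ∑ X ∈ I, C (μ X) * Polynomial.X ^ (I.sup rk - rk X)

/-- A central arrangement: the intersection of all hyperplanes is nonempty. -/
def IsCentral (A : Finset (AffineSubspace K V)) : Prop := A.inf id ≠ ⊥

/-- A modular element `Z ∈ L(A)`: `r(Z) + r(X) = r(Z ∧ X) + r(Z ∨ X)` for all `X ∈ L(A)`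
(the join `Z ∨ X` being the intersection `Z ⊓ X` of affine subspaces). -/
def IsModularElement (A : Finset (AffineSubspace K V)) (Z : AffineSubspace K V) : Prop :=
  Z ∈ poset A ∧ ∀ X ∈ poset A, rk Z + rk X = rk (lmeet A Z X) + rk (Z ⊓ X)

/-- The intersection poset of the restriction `B^W = {H ∩ W : H ∈ B, H ∩ W ≠ ∅}`
of the arrangement `B` to the affine subspace `W`, realized as a finset of affine
subspaces of the ambient space (with minimal element `W`). -/
noncomputable def tracePoset (B : Finset (AffineSubspace K V)) (W : AffineSubspace K V) :
    Finset (AffineSubspace K V) :=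
  (((B.filter fun H => H ⊓ W ≠ ⊥).image fun H => H ⊓ W).powerset.image
      fun S => W ⊓ S.inf id).filter (· ≠ ⊥)

/-- A modular subarrangement `B ⊆ A`: `L(B)`, viewed as a subposet of `L(A)`,
is a modular ideal of `L(A)`. -/
def IsModularSub (A B : Finset (AffineSubspace K V)) : Prop :=
  B ⊆ A ∧ IsModularIdeal A (poset B)

end HypArr

namespace HypArr

variable {K V : Type*} [Field K] [AddCommGroup V] [Module K V] [FiniteDimensional K V]

/-- The cone `cH` over an affine hyperplane `H ⊆ V`: the linear hyperplane of `V × K`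
spanned by `H × {1}` (for `H : α·x = a` this is the hyperplane `α·x = a·y`). -/
noncomputable def cone (H : AffineSubspace K V) : AffineSubspace K (V × K) :=
  (Submodule.span K ((fun x => (x, (1 : K))) '' (H : Set V))).toAffineSubspace

/-- The additional hyperplane `K : y = 0` of the cone construction. -/
noncomputable def addHyp (K V : Type*) [Field K] [AddCommGroup V] [Module K V] :
    AffineSubspace K (V × K) :=
  (LinearMap.ker (LinearMap.snd K V K)).toAffineSubspace

/-- The cone `cA` over the affine arrangement `A`: the linear arrangement in `V × K`
consisting of the cones `cH` for `H ∈ A` together with the additional hyperplane. -/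
noncomputable def coneArr (A : Finset (AffineSubspace K V)) :
    Finset (AffineSubspace K (V × K)) :=
  insert (addHyp K V) (A.image cone)

end HypArr

lemma Fin.antitone_cons_top {α : Type*} [PartialOrder α] [OrderTop α] {n : ℕ} {f : Fin n → α}
    (hf : Antitone f) : Antitone (Fin.cons ⊤ f : Fin (n + 1) → α) := by
  intro i j hij
  cases j using Fin.cases with
  | zero => rw [Fin.le_zero_iff.1 hij]
  | succ j =>
    cases i using Fin.cases with
    | zero => exact le_top
    | succ i => simpa using hf (Fin.succ_le_succ_iff.1 hij)

namespace HypArr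

open Module

variable {K V : Type*} [Field K] [AddCommGroup V] [Module K V]

section Codim

noncomputable def codim (U : Submodule K V) : ℕ := finrank K V - finrank K U

lemma rk_eq_codim (X : AffineSubspace K V) : rk X = codim X.direction := rfl

variable [FiniteDimensional K V]

lemma codim_add_finrank (U : Submodule K V) : codim U + finrank K U = finrank K V := by
  have := U.finrank_le
  unfold codim
  omega

lemma codim_eq_zero_iff {U : Submodule K V} : codim U = 0 ↔ U = ⊤ := by
  refine ⟨fun h => Submodule.eq_top_of_finrank_eq ?_, fun h => ?_⟩
  · have := codim_add_finrank U
    omega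
  · subst h
    simp [codim]

lemma codim_anti {U W : Submodule K V} (h : U ≤ W) : codim W ≤ codim U := by
  have := Submodule.finrank_mono h
  unfold codim
  omega

lemma codim_lt_of_lt {U W : Submodule K V} (h : U < W) : codim W < codim U := by
  have := Submodule.finrank_lt_finrank_of_lt h
  have := codim_add_finrank U
  have := codim_add_finrank W
  omega

lemma eq_of_le_of_codim_eq {U W : Submodule K V} (h : U ≤ W) (hc : codim U = codim W) :
    U = W := by
  refine Submodule.eq_of_le_of_finrank_le h ?_
  have := codim_add_finrank U
  have := codim_add_finrank W
  omega

lemma codim_inf_add_codim_sup (U W : Submodule K V) :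
    codim (U ⊓ W) + codim (U ⊔ W) = codim U + codim W := by
  have := Submodule.finrank_sup_add_finrank_inf_eq U W
  have := codim_add_finrank U
  have := codim_add_finrank W
  have := codim_add_finrank (U ⊓ W)
  have := codim_add_finrank (U ⊔ W)
  omega

lemma codim_inf_le_add (U W : Submodule K V) : codim (U ⊓ W) ≤ codim U + codim W := by
  have := codim_inf_add_codim_sup U W
  omega

lemma codim_inf_eq_add_iff {U W : Submodule K V} :
    codim (U ⊓ W) = codim U + codim W ↔ U ⊔ W = ⊤ := by
  have := codim_inf_add_codim_sup U W
  rw [← codim_eq_zero_iff]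
  omega

lemma sup_eq_top_of_codim_eq_one {H U : Submodule K V} (hH : codim H = 1) (hU : ¬U ≤ H) :
    H ⊔ U = ⊤ := by
  have := codim_lt_of_lt (left_lt_sup.2 hU)
  exact codim_eq_zero_iff.1 (by omega)

lemma exists_subset_inf_eq_and_sup_eq_top {ι : Type*} (m : Submodule K V)
    (f : ι → Submodule K V) (S : Finset ι) (hS : ∀ i ∈ S, codim (f i) = 1) :
    ∃ T ⊆ S, m ⊓ T.inf f = m ⊓ S.inf f ∧ m ⊔ T.inf f = ⊤ := by
  induction S using Finset.induction_on with
  | empty => exact ⟨∅, subset_rfl, rfl, by simp⟩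
  | @insert i S hiS ih =>
    obtain ⟨T, hTS, hinf, hsup⟩ := ih fun j hj => hS j (Finset.mem_insert_of_mem hj)
    have hcut : m ⊓ (insert i S).inf f = f i ⊓ (m ⊓ T.inf f) := by
      rw [Finset.inf_insert, hinf, inf_left_comm]
    by_cases hle : m ⊓ T.inf f ≤ f i
    · exact ⟨T, hTS.trans (Finset.subset_insert _ _), by rw [hcut, inf_eq_right.2 hle], hsup⟩
    refine ⟨insert i T, Finset.insert_subset_insert _ hTS, ?_, ?_⟩
    · rw [hcut, Finset.inf_insert, inf_left_comm]
    have hi : codim (f i) = 1 := hS i (Finset.mem_insert_self _ _)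
    have h1 : codim (m ⊓ (f i ⊓ T.inf f)) = 1 + codim (m ⊓ T.inf f) := by
      rw [inf_left_comm, codim_inf_eq_add_iff.2 (sup_eq_top_of_codim_eq_one hi hle), hi]
    have h2 := codim_inf_eq_add_iff.2 hsup
    have h3 := codim_inf_le_add (f i) (T.inf f)
    have h4 := codim_inf_le_add m (f i ⊓ T.inf f)
    rw [Finset.inf_insert, ← codim_inf_eq_add_iff]
    omega

end Codim

section Poset

variable {A B S : Finset (AffineSubspace K V)} {X Y H : AffineSubspace K V}

lemma mem_finset_inf {ι : Type*} {s : Finset ι} {f : ι → AffineSubspace K V} {p : V} :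
    p ∈ s.inf f ↔ ∀ i ∈ s, p ∈ f i := by
  simp [Finset.inf_eq_iInf, AffineSubspace.mem_iInf_iff]

lemma rk_top : rk (⊤ : AffineSubspace K V) = 0 := by
  rw [rk, AffineSubspace.direction_top, finrank_top, Nat.sub_self]

lemma isArrangement_iff [FiniteDimensional K V] : IsArrangement A ↔ ∀ H ∈ A, H ≠ ⊥ ∧ rk H = 1 := by
  refine forall₂_congr fun H _ => and_congr_right fun _ => ?_
  have := H.direction.finrank_le
  unfold rk
  omega

namespace IsArrangement

lemma ne_bot (hA : IsArrangement A) (hH : H ∈ A) : H ≠ ⊥ := (hA H hH).1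

lemma codim_direction [FiniteDimensional K V] (hA : IsArrangement A) (hH : H ∈ A) :
    codim H.direction = 1 :=
  (isArrangement_iff.1 hA H hH).2

lemma direction_ne_top [FiniteDimensional K V] (hA : IsArrangement A) (hH : H ∈ A) :
    H.direction ≠ ⊤ := by
  rw [Ne, ← codim_eq_zero_iff, hA.codim_direction hH]
  exact one_ne_zero

lemma ne_top [FiniteDimensional K V] (hA : IsArrangement A) (hH : H ∈ A) : H ≠ ⊤ := by
  rintro rfl
  exact hA.direction_ne_top hH (AffineSubspace.direction_top K V V)

lemma subset (hA : IsArrangement A) (hBA : B ⊆ A) : IsArrangement B :=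
  fun H hH => hA H (hBA hH)

end IsArrangement

noncomputable def dirInf (S : Finset (AffineSubspace K V)) : Submodule K V :=
  S.inf AffineSubspace.direction

lemma mem_poset_iff : X ∈ poset A ↔ (∃ S ⊆ A, S.inf id = X) ∧ X ≠ ⊥ := by
  simp [poset]

lemma ne_bot_of_mem_poset (hX : X ∈ poset A) : X ≠ ⊥ := (mem_poset_iff.1 hX).2

lemma finset_inf_mem_poset (hS : S ⊆ A) (hne : S.inf id ≠ ⊥) : S.inf id ∈ poset A :=
  mem_poset_iff.2 ⟨⟨S, hS, rfl⟩, hne⟩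

lemma top_mem_poset (A : Finset (AffineSubspace K V)) : ⊤ ∈ poset A :=
  finset_inf_mem_poset (Finset.empty_subset A) (by simp)

lemma IsArrangement.mem_poset (hA : IsArrangement A) (hH : H ∈ A) : H ∈ poset A := by
  simpa using finset_inf_mem_poset (Finset.singleton_subset_iff.2 hH) (by simpa using hA.ne_bot hH)

lemma poset_mono (h : B ⊆ A) : poset B ⊆ poset A := by
  intro X hX
  obtain ⟨⟨S, hS, rfl⟩, hne⟩ := mem_poset_iff.1 hX
  exact finset_inf_mem_poset (hS.trans h) hne

lemma inf_mem_poset (hX : X ∈ poset A) (hY : Y ∈ poset A) (hne : X ⊓ Y ≠ ⊥) :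
    X ⊓ Y ∈ poset A := by
  obtain ⟨⟨S, hS, rfl⟩, -⟩ := mem_poset_iff.1 hX
  obtain ⟨⟨T, hT, rfl⟩, -⟩ := mem_poset_iff.1 hY
  rw [← Finset.inf_union] at hne ⊢
  exact finset_inf_mem_poset (Finset.union_subset hS hT) hne

lemma inf_filter_le_eq (hX : X ∈ poset A) : (A.filter (X ≤ ·)).inf id = X := by
  obtain ⟨⟨S, hS, rfl⟩, -⟩ := mem_poset_iff.1 hX
  refine le_antisymm (Finset.inf_mono fun H hH => ?_) (Finset.le_inf fun H hH => ?_)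
  · exact Finset.mem_filter.2 ⟨hS hH, Finset.inf_le hH⟩
  · exact (Finset.mem_filter.1 hH).2

lemma exists_mem_le_of_ne_top (hX : X ∈ poset A) (hne : X ≠ ⊤) : ∃ H ∈ A, X ≤ H := by
  by_contra! h
  refine hne ?_
  rw [← inf_filter_le_eq hX, Finset.filter_false_of_mem fun H hH => h H hH]
  simp

lemma direction_finset_inf {p : V} (hp : p ∈ S.inf id) : (S.inf id).direction = dirInf S := by
  have hpS : ∀ H ∈ S, p ∈ H := mem_finset_inf.1 hp
  ext v
  rw [← AffineSubspace.vadd_mem_iff_mem_direction v hp, mem_finset_inf, dirInf,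
    Submodule.mem_finsetInf]
  exact forall₂_congr fun H hH => AffineSubspace.vadd_mem_iff_mem_direction v (hpS H hH)

lemma dirInf_le_direction (hX : X ∈ poset A) : dirInf A ≤ X.direction := by
  obtain ⟨⟨S, hS, rfl⟩, hne⟩ := mem_poset_iff.1 hX
  obtain ⟨p, hp⟩ := (AffineSubspace.nonempty_iff_ne_bot _).2 hne
  rw [direction_finset_inf hp]
  exact Finset.inf_mono hS

lemma inf_ne_bot_of_direction_sup_eq_top (hX : X ≠ ⊥) (hY : Y ≠ ⊥)
    (h : X.direction ⊔ Y.direction = ⊤) : X ⊓ Y ≠ ⊥ := by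
  rw [← AffineSubspace.nonempty_iff_ne_bot] at hX hY ⊢
  exact AffineSubspace.inter_nonempty_of_nonempty_of_sup_direction_eq_top hX hY h

lemma rk_inf_eq_add_iff [FiniteDimensional K V] (h : X ⊓ Y ≠ ⊥) :
    rk (X ⊓ Y) = rk X + rk Y ↔ X.direction ⊔ Y.direction = ⊤ := by
  obtain ⟨p, hp⟩ := (AffineSubspace.nonempty_iff_ne_bot _).2 h
  rw [rk_eq_codim, rk_eq_codim, rk_eq_codim, AffineSubspace.direction_inf_of_mem hp.1 hp.2,
    codim_inf_eq_add_iff]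

lemma direction_le_of_inf_eq_bot [FiniteDimensional K V] (hX : X ≠ ⊥) (hH : H ≠ ⊥)
    (hcod : codim H.direction = 1) (h : X ⊓ H = ⊥) : X.direction ≤ H.direction := by
  by_contra hle
  rw [inf_comm] at h
  exact inf_ne_bot_of_direction_sup_eq_top hH hX (sup_eq_top_of_codim_eq_one hcod hle) h

/-- A flat of maximal rank lies parallel to every hyperplane it does not meet, and inside every
hyperplane it meets. -/
lemma exists_direction_eq_dirInf [FiniteDimensional K V] (hA : IsArrangement A) :
    ∃ X ∈ poset A, X.direction = dirInf A := by
  obtain ⟨X, hX, hmax⟩ := Finset.exists_mem_eq_sup (poset A) ⟨⊤, top_mem_poset A⟩ rk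
  refine ⟨X, hX, le_antisymm (Finset.le_inf fun H hH => ?_) (dirInf_le_direction hX)⟩
  by_cases hXH : X ⊓ H = ⊥
  · exact direction_le_of_inf_eq_bot (ne_bot_of_mem_poset hX) (hA.ne_bot hH)
      (hA.codim_direction hH) hXH
  obtain ⟨p, hp⟩ := (AffineSubspace.nonempty_iff_ne_bot _).2 hXH
  have hrk : rk (X ⊓ H) ≤ rk X := hmax ▸ Finset.le_sup (inf_mem_poset hX (hA.mem_poset hH) hXH)
  rw [rk_eq_codim, rk_eq_codim, AffineSubspace.direction_inf_of_mem hp.1 hp.2] at hrk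
  have := eq_of_le_of_codim_eq inf_le_left (le_antisymm hrk (codim_anti inf_le_left))
  exact this ▸ inf_le_right

lemma rank_eq_codim_dirInf [FiniteDimensional K V] (hA : IsArrangement A) :
    rank A = codim (dirInf A) := by
  obtain ⟨X, hX, hdir⟩ := exists_direction_eq_dirInf hA
  refine le_antisymm (Finset.sup_le fun Y hY => codim_anti (dirInf_le_direction hY)) ?_
  calc codim (dirInf A) = rk X := by rw [rk_eq_codim, hdir]
    _ ≤ rank A := Finset.le_sup hX

end Poset

section Lmeet

variable {A : Finset (AffineSubspace K V)} {X Y Z W : AffineSubspace K V}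

lemma le_lmeet_left (A : Finset (AffineSubspace K V)) (X Y : AffineSubspace K V) :
    X ≤ lmeet A X Y :=
  le_sInf fun _ hW => hW.2.1

lemma le_lmeet_right (A : Finset (AffineSubspace K V)) (X Y : AffineSubspace K V) :
    Y ≤ lmeet A X Y :=
  le_sInf fun _ hW => hW.2.2

lemma lmeet_le (hW : W ∈ poset A) (hX : X ≤ W) (hY : Y ≤ W) : lmeet A X Y ≤ W :=
  sInf_le ⟨hW, hX, hY⟩

lemma lmeet_mono_right {Y' : AffineSubspace K V} (h : Y ≤ Y') : lmeet A X Y ≤ lmeet A X Y' :=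
  sInf_le_sInf fun _ hW => ⟨hW.1, hW.2.1, h.trans hW.2.2⟩

lemma lmeet_eq_top_iff [FiniteDimensional K V] (hA : IsArrangement A) :
    lmeet A X Y = ⊤ ↔ ∀ H ∈ A, X ≤ H → ¬Y ≤ H := by
  refine ⟨fun h H hH hX hY => hA.ne_top hH ?_, fun h => top_le_iff.1 (le_sInf ?_)⟩
  · exact top_le_iff.1 (h ▸ lmeet_le (hA.mem_poset hH) hX hY)
  rintro W ⟨hW, hXW, hYW⟩
  by_contra hne
  obtain ⟨H, hH, hWH⟩ := exists_mem_le_of_ne_top hW fun h' => hne h'.ge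
  exact h H hH (hXW.trans hWH) (hYW.trans hWH)

lemma isModularElement_top (A : Finset (AffineSubspace K V)) : IsModularElement A ⊤ := by
  refine ⟨top_mem_poset A, fun X _ => ?_⟩
  rw [top_le_iff.1 (le_lmeet_left A ⊤ X), top_inf_eq, rk_top]

lemma mem_of_mem_poset {p : V} (hp : ∀ H ∈ A, p ∈ H) (hX : X ∈ poset A) : p ∈ X := by
  obtain ⟨⟨S, hS, rfl⟩, -⟩ := mem_poset_iff.1 hX
  exact mem_finset_inf.2 fun H hH => hp H (hS hH)

lemma exists_flat_inf_eq_and_direction_sup_eq_top [FiniteDimensional K V] (hA : IsArrangement A)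
    {p : V} (hp : ∀ H ∈ A, p ∈ H) (hX : X ∈ poset A) {M : AffineSubspace K V} (hpM : p ∈ M)
    (hXM : X ≤ M) :
    ∃ Y ∈ poset A, X ≤ Y ∧ Y ⊓ M = X ∧ Y.direction ⊔ M.direction = ⊤ := by
  set T := A.filter (X ≤ ·)
  obtain ⟨T', hT'T, hinf, hsup⟩ := exists_subset_inf_eq_and_sup_eq_top M.direction
    AffineSubspace.direction T fun H hH => hA.codim_direction (Finset.mem_filter.1 hH).1
  have hT'A : T' ⊆ A := hT'T.trans (Finset.filter_subset _ _)
  have hpY : p ∈ T'.inf id := mem_finset_inf.2 fun H hH => hp H (hT'A hH)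
  have hpX : p ∈ X := mem_of_mem_poset hp hX
  have hdirX : X.direction = dirInf T := by
    rw [← direction_finset_inf (p := p) (inf_filter_le_eq hX ▸ hpX), inf_filter_le_eq hX]
  refine ⟨T'.inf id, finset_inf_mem_poset hT'A ((AffineSubspace.nonempty_iff_ne_bot _).1 ⟨p, hpY⟩),
    Finset.le_inf fun H hH => (Finset.mem_filter.1 (hT'T hH)).2, ?_, ?_⟩
  · have hXM' : dirInf T ≤ M.direction := hdirX ▸ AffineSubspace.direction_le hXM
    refine (AffineSubspace.eq_iff_direction_eq_of_mem
      ((AffineSubspace.mem_inf_iff _ _ _).2 ⟨hpY, hpM⟩) hpX).2 ?_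
    rw [AffineSubspace.direction_inf_of_mem hpY hpM, direction_finset_inf hpY, hdirX, inf_comm]
    exact hinf.trans (inf_eq_right.2 hXM')
  · rw [direction_finset_inf hpY, sup_comm]
    exact hsup

/-- Writing `X = Y ⊓ M` with `M = Z ∧ X` and `Y` transversal to `M`, the flat `Y` shares no
hyperplane with `Z` and `Z ⊓ X = Z ⊓ Y`. -/
lemma isModularElement_of_rk_inf_eq_add [FiniteDimensional K V] (hA : IsArrangement A)
    (hcen : IsCentral A) (hZ : Z ∈ poset A)
    (h : ∀ Y ∈ poset A, lmeet A Z Y = ⊤ → rk (Z ⊓ Y) = rk Z + rk Y) :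
    IsModularElement A Z := by
  obtain ⟨p, hp⟩ := (AffineSubspace.nonempty_iff_ne_bot _).2 hcen
  have hpA : ∀ H ∈ A, p ∈ H := mem_finset_inf.1 hp
  refine ⟨hZ, fun X hX => ?_⟩
  set M := lmeet A Z X
  have hZM : Z ≤ M := le_lmeet_left A Z X
  obtain ⟨Y, hY, hXY, hYM, hsup⟩ := exists_flat_inf_eq_and_direction_sup_eq_top hA hpA hX
    (hZM (mem_of_mem_poset hpA hZ)) (le_lmeet_right A Z X)
  have hZY : lmeet A Z Y = ⊤ := (lmeet_eq_top_iff hA).2 fun H hH hZH hYH => by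
    have hMH : M ≤ H := lmeet_le (hA.mem_poset hH) hZH (hXY.trans hYH)
    refine hA.direction_ne_top hH (top_le_iff.1 (hsup ▸ sup_le ?_ ?_))
    · exact AffineSubspace.direction_le hYH
    · exact AffineSubspace.direction_le hMH
  have hZX : Z ⊓ X = Z ⊓ Y := by
    rw [← hYM, inf_comm Y, ← inf_assoc, inf_eq_left.2 hZM]
  have hrkX : rk X = rk Y + rk M :=
    hYM ▸ (rk_inf_eq_add_iff (hYM ▸ ne_bot_of_mem_poset hX)).2 hsup
  rw [hZX, h Y hY hZY]
  omega

end Lmeet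

section Cone

variable {X Y : AffineSubspace K V} {U W : Submodule K V} {v : V} {t : K}

noncomputable def atInfinity (U : Submodule K V) : AffineSubspace K (V × K) :=
  (U.prod (⊥ : Submodule K K)).toAffineSubspace

lemma mk_mem_atInfinity : (v, t) ∈ atInfinity U ↔ v ∈ U ∧ t = 0 := by
  rw [atInfinity, Submodule.mem_toAffineSubspace, Submodule.mem_prod, Submodule.mem_bot]

lemma atInfinity_top : atInfinity (⊤ : Submodule K V) = addHyp K V := by
  ext ⟨v, t⟩
  simp [mk_mem_atInfinity, addHyp]

lemma atInfinity_ne_bot : atInfinity U ≠ ⊥ :=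
  (AffineSubspace.nonempty_iff_ne_bot _).1 ⟨0, mk_mem_atInfinity.2 ⟨U.zero_mem, rfl⟩⟩

lemma atInfinity_le_atInfinity : atInfinity U ≤ atInfinity W ↔ U ≤ W := by
  refine ⟨fun h u hu => (mk_mem_atInfinity.1 (h (mk_mem_atInfinity.2 ⟨hu, rfl⟩))).1, ?_⟩
  rintro h ⟨v, t⟩ hv
  obtain ⟨hvU, rfl⟩ := mk_mem_atInfinity.1 hv
  exact mk_mem_atInfinity.2 ⟨h hvU, rfl⟩

lemma rk_atInfinity [FiniteDimensional K V] (U : Submodule K V) :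
    rk (atInfinity U) = codim U + 1 := by
  have hU : finrank K (U.prod (⊥ : Submodule K K)) = finrank K U := by
    rw [← Submodule.map_inl]
    exact (Submodule.equivMapOfInjective _ LinearMap.inl_injective U).finrank_eq.symm
  rw [rk, atInfinity, Submodule.toAffineSubspace_direction, hU, finrank_prod, finrank_self]
  have := codim_add_finrank U
  omega

lemma rk_addHyp [FiniteDimensional K V] : rk (addHyp K V) = 1 := by
  rw [← atInfinity_top, rk_atInfinity, codim_eq_zero_iff.2 rfl]

lemma mk_mem_cone_iff {p : V} (hp : p ∈ X) : (v, t) ∈ cone X ↔ v - t • p ∈ X.direction := by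
  let φ : V × K →ₗ[K] V := LinearMap.fst K V K - (LinearMap.snd K V K).smulRight p
  suffices hφ : Submodule.span K ((fun x => (x, (1 : K))) '' (X : Set V)) = X.direction.comap φ by
    rw [cone, Submodule.mem_toAffineSubspace, hφ]
    simp [φ]
  refine le_antisymm (Submodule.span_le.2 ?_) fun q hq => ?_
  · rintro _ ⟨x, hx, rfl⟩
    simpa [φ] using AffineSubspace.vsub_mem_direction hx hp
  have hmk : ∀ x ∈ X, ((x, 1) : V × K) ∈ Submodule.span K ((fun x => (x, (1 : K))) '' X) :=
    fun x hx => Submodule.subset_span ⟨x, hx, rfl⟩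
  have hw : φ q + p ∈ X := by
    simpa [vadd_eq_add] using (AffineSubspace.vadd_mem_iff_mem_direction _ hp).2 hq
  have hq' : q = (φ q + p, 1) - (p, 1) + q.2 • (p, 1) := by
    ext <;> simp [φ]
  rw [hq']
  exact add_mem (sub_mem (hmk _ hw) (hmk p hp)) (Submodule.smul_mem _ _ (hmk p hp))

lemma mk_zero_mem_cone (hX : X ≠ ⊥) : (v, 0) ∈ cone X ↔ v ∈ X.direction := by
  obtain ⟨p, hp⟩ := (AffineSubspace.nonempty_iff_ne_bot _).2 hX
  rw [mk_mem_cone_iff hp, zero_smul, sub_zero]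

lemma mk_one_mem_cone (hX : X ≠ ⊥) : (v, 1) ∈ cone X ↔ v ∈ X := by
  obtain ⟨p, hp⟩ := (AffineSubspace.nonempty_iff_ne_bot _).2 hX
  rw [mk_mem_cone_iff hp, one_smul]
  exact AffineSubspace.vsub_right_mem_direction_iff_mem hp v

lemma inv_smul_mem_of_mk_mem_cone (hX : X ≠ ⊥) (h : (v, t) ∈ cone X) (ht : t ≠ 0) :
    t⁻¹ • v ∈ X := by
  obtain ⟨p, hp⟩ := (AffineSubspace.nonempty_iff_ne_bot _).2 hX
  rw [mk_mem_cone_iff hp] at h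
  have := Submodule.smul_mem _ t⁻¹ h
  rwa [smul_sub, inv_smul_smul₀ ht, ← vsub_eq_sub,
    AffineSubspace.vsub_right_mem_direction_iff_mem hp] at this

lemma cone_ne_bot (hX : X ≠ ⊥) : cone X ≠ ⊥ := by
  obtain ⟨p, hp⟩ := (AffineSubspace.nonempty_iff_ne_bot _).2 hX
  exact (AffineSubspace.nonempty_iff_ne_bot _).1 ⟨(p, 1), (mk_one_mem_cone hX).2 hp⟩

lemma cone_le_cone_iff (hX : X ≠ ⊥) (hY : Y ≠ ⊥) : cone X ≤ cone Y ↔ X ≤ Y := by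
  refine ⟨fun h x hx => (mk_one_mem_cone hY).1 (h ((mk_one_mem_cone hX).2 hx)), fun h => ?_⟩
  intro q hq
  rw [cone, Submodule.mem_toAffineSubspace] at hq ⊢
  exact Submodule.span_mono (Set.image_mono h) hq

lemma atInfinity_le_cone_iff (hX : X ≠ ⊥) : atInfinity U ≤ cone X ↔ U ≤ X.direction := by
  refine ⟨fun h u hu => (mk_zero_mem_cone hX).1 (h (mk_mem_atInfinity.2 ⟨hu, rfl⟩)), ?_⟩
  rintro h ⟨v, t⟩ hv
  obtain ⟨hvU, rfl⟩ := mk_mem_atInfinity.1 hv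
  exact (mk_zero_mem_cone hX).2 (h hvU)

lemma not_cone_le_atInfinity (hX : X ≠ ⊥) : ¬cone X ≤ atInfinity U := by
  obtain ⟨p, hp⟩ := (AffineSubspace.nonempty_iff_ne_bot _).2 hX
  exact fun h => one_ne_zero (mk_mem_atInfinity.1 (h ((mk_one_mem_cone hX).2 hp))).2

lemma atInfinity_inf_cone (hX : X ≠ ⊥) :
    atInfinity U ⊓ cone X = atInfinity (U ⊓ X.direction) := by
  ext ⟨v, t⟩
  simp only [AffineSubspace.mem_inf_iff, mk_mem_atInfinity, Submodule.mem_inf]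
  constructor
  · rintro ⟨⟨hv, rfl⟩, h⟩
    exact ⟨⟨hv, (mk_zero_mem_cone hX).1 h⟩, rfl⟩
  · rintro ⟨⟨hv, hd⟩, rfl⟩
    exact ⟨⟨hv, rfl⟩, (mk_zero_mem_cone hX).2 hd⟩

/-- `cX` is transversal to the hyperplane at infinity and meets it in `X.direction × {0}`. -/
lemma rk_cone [FiniteDimensional K V] (hX : X ≠ ⊥) : rk (cone X) = rk X := by
  obtain ⟨p, hp⟩ := (AffineSubspace.nonempty_iff_ne_bot _).2 hX
  have h0 : ((0 : V), (0 : K)) ∈ cone X := (mk_zero_mem_cone hX).2 (Submodule.zero_mem _)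
  have h0' : ((0 : V), (0 : K)) ∈ addHyp K V := by simp [addHyp]
  have hinf := congrArg rk (atInfinity_inf_cone (U := ⊤) hX)
  rw [top_inf_eq, atInfinity_top, rk_atInfinity, rk_eq_codim,
    AffineSubspace.direction_inf_of_mem h0' h0] at hinf
  have hsup : (addHyp K V).direction ⊔ (cone X).direction = ⊤ := by
    refine sup_eq_top_of_codim_eq_one rk_addHyp fun h => ?_
    have := h (AffineSubspace.vsub_mem_direction ((mk_one_mem_cone hX).2 hp) h0)
    simp [addHyp] at this
  have := codim_inf_add_codim_sup (addHyp K V).direction (cone X).direction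
  rw [hsup, codim_eq_zero_iff.2 rfl, ← rk_eq_codim, ← rk_eq_codim, rk_addHyp] at this
  rw [rk_eq_codim X]
  omega

end Cone

section ConeArr

variable {A S : Finset (AffineSubspace K V)} {X : AffineSubspace K V}
  {X' : AffineSubspace K (V × K)}

lemma finset_inf_cone {p : V} (hp : p ∈ S.inf id) : S.inf cone = cone (S.inf id) := by
  have hpS : ∀ H ∈ S, p ∈ H := mem_finset_inf.1 hp
  ext ⟨v, t⟩
  rw [mem_finset_inf, mk_mem_cone_iff hp, direction_finset_inf hp, dirInf,
    Submodule.mem_finsetInf]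
  exact forall₂_congr fun H hH => mk_mem_cone_iff (hpS H hH)

lemma finset_inf_cone_of_eq_bot (hS : ∀ H ∈ S, H ≠ ⊥) (h : S.inf id = ⊥) :
    S.inf cone = atInfinity (dirInf S) := by
  ext ⟨v, t⟩
  rw [mem_finset_inf, mk_mem_atInfinity, dirInf, Submodule.mem_finsetInf]
  by_cases ht : t = 0
  · subst ht
    simp only [and_true]
    exact forall₂_congr fun H hH => mk_zero_mem_cone (hS H hH)
  refine iff_of_false (fun hv => ?_) fun h' => ht h'.2
  have : t⁻¹ • v ∈ S.inf id :=
    mem_finset_inf.2 fun H hH => inv_smul_mem_of_mk_mem_cone (hS H hH) (hv H hH) ht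
  rw [h] at this
  exact AffineSubspace.notMem_bot K V _ this

lemma addHyp_inf_finset_inf_cone (hS : ∀ H ∈ S, H ≠ ⊥) :
    addHyp K V ⊓ S.inf cone = atInfinity (dirInf S) := by
  ext ⟨v, t⟩
  rw [← atInfinity_top, AffineSubspace.mem_inf_iff, mk_mem_atInfinity, mk_mem_atInfinity,
    mem_finset_inf, dirInf, Submodule.mem_finsetInf]
  constructor
  · rintro ⟨⟨-, rfl⟩, h⟩
    exact ⟨fun H hH => (mk_zero_mem_cone (hS H hH)).1 (h H hH), rfl⟩
  · rintro ⟨h, rfl⟩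
    exact ⟨⟨trivial, rfl⟩, fun H hH => (mk_zero_mem_cone (hS H hH)).2 (h H hH)⟩

lemma image_cone_subset_coneArr (hS : S ⊆ A) : S.image cone ⊆ coneArr A :=
  (Finset.image_subset_image hS).trans (Finset.subset_insert _ _)

lemma cone_mem_poset_coneArr (hX : X ∈ poset A) : cone X ∈ poset (coneArr A) := by
  obtain ⟨⟨S, hSA, rfl⟩, hne⟩ := mem_poset_iff.1 hX
  obtain ⟨p, hp⟩ := (AffineSubspace.nonempty_iff_ne_bot _).2 hne
  have := finset_inf_mem_poset (image_cone_subset_coneArr hSA)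
  rw [Finset.inf_image, Function.id_comp, finset_inf_cone hp] at this
  exact this (cone_ne_bot hne)

lemma atInfinity_mem_poset_coneArr (hA : IsArrangement A) (hS : S ⊆ A) :
    atInfinity (dirInf S) ∈ poset (coneArr A) := by
  have := finset_inf_mem_poset (Finset.insert_subset_insert (addHyp K V)
    (Finset.image_subset_image (f := cone) hS))
  rw [Finset.inf_insert, Finset.inf_image, Function.id_comp, id,
    addHyp_inf_finset_inf_cone fun H hH => hA.ne_bot (hS hH)] at this
  exact this atInfinity_ne_bot

lemma mem_poset_coneArr_cases (hA : IsArrangement A) (hX' : X' ∈ poset (coneArr A)) :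
    (∃ X ∈ poset A, X' = cone X) ∨ ∃ S ⊆ A, X' = atInfinity (dirInf S) := by
  obtain ⟨⟨T, hT, rfl⟩, hne⟩ := mem_poset_iff.1 hX'
  obtain ⟨S, hSA, hST⟩ := Finset.subset_image_iff.1 (Finset.subset_insert_iff.1 hT)
  have hS : ∀ H ∈ S, H ≠ ⊥ := fun H hH => hA.ne_bot (hSA hH)
  by_cases ha : addHyp K V ∈ T
  · rw [← Finset.insert_erase ha, Finset.inf_insert, ← hST, Finset.inf_image,
      Function.id_comp, id, addHyp_inf_finset_inf_cone hS]
    exact Or.inr ⟨S, hSA, rfl⟩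
  rw [← Finset.erase_eq_of_notMem ha, ← hST, Finset.inf_image, Function.id_comp] at hne ⊢
  by_cases hbot : S.inf id = ⊥
  · exact Or.inr ⟨S, hSA, finset_inf_cone_of_eq_bot hS hbot⟩
  obtain ⟨p, hp⟩ := (AffineSubspace.nonempty_iff_ne_bot _).2 hbot
  exact Or.inl ⟨S.inf id, finset_inf_mem_poset hSA hbot, finset_inf_cone hp⟩

lemma isArrangement_coneArr [FiniteDimensional K V] (hA : IsArrangement A) :
    IsArrangement (coneArr A) := by
  rw [isArrangement_iff]
  intro H' hH'
  rcases Finset.mem_insert.1 hH' with rfl | hH'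
  · exact ⟨atInfinity_top (K := K) (V := V) ▸ atInfinity_ne_bot, rk_addHyp⟩
  obtain ⟨H, hH, rfl⟩ := Finset.mem_image.1 hH'
  exact ⟨cone_ne_bot (hA.ne_bot hH), (rk_cone (hA.ne_bot hH)).trans
    (isArrangement_iff.1 hA H hH).2⟩

lemma isCentral_coneArr (A : Finset (AffineSubspace K V)) : IsCentral (coneArr A) := by
  refine (AffineSubspace.nonempty_iff_ne_bot _).1 ⟨0, mem_finset_inf.2 fun H' hH' => ?_⟩
  rcases Finset.mem_insert.1 hH' with rfl | hH'
  · simp [addHyp]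
  obtain ⟨H, -, rfl⟩ := Finset.mem_image.1 hH'
  exact Submodule.mem_toAffineSubspace.2 (Submodule.zero_mem _)

lemma rank_coneArr [FiniteDimensional K V] (hA : IsArrangement A) :
    rank (coneArr A) = rank A + 1 := by
  refine le_antisymm (Finset.sup_le fun X' hX' => ?_) ?_
  · rcases mem_poset_coneArr_cases hA hX' with ⟨X, hX, rfl⟩ | ⟨S, hS, rfl⟩
    · rw [rk_cone (ne_bot_of_mem_poset hX)]
      exact (Finset.le_sup hX).trans (Nat.le_succ _)
    · rw [rk_atInfinity, rank_eq_codim_dirInf hA]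
      exact Nat.succ_le_succ (codim_anti (Finset.inf_mono hS))
  calc rank A + 1 = rk (atInfinity (dirInf A)) := by rw [rk_atInfinity, rank_eq_codim_dirInf hA]
    _ ≤ rank (coneArr A) := Finset.le_sup (atInfinity_mem_poset_coneArr hA subset_rfl)

lemma exists_eq_atInfinity_of_le_addHyp (hA : IsArrangement A)
    (hX' : X' ∈ poset (coneArr A)) (h : X' ≤ addHyp K V) :
    ∃ S ⊆ A, X' = atInfinity (dirInf S) := by
  rcases mem_poset_coneArr_cases hA hX' with ⟨X, hX, rfl⟩ | hS
  · rw [← atInfinity_top] at h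
    exact absurd h (not_cone_le_atInfinity (ne_bot_of_mem_poset hX))
  · exact hS

end ConeArr

section ModularIdeal

variable {A I : Finset (AffineSubspace K V)} {Y : AffineSubspace K V}

lemma isModularIdeal_iff :
    IsModularIdeal A I ↔ IsIdeal A I ∧ IsIdeal A (meetCompl A I) ∧
      (∀ X ∈ poset A, X ≠ ⊤ →
        (∃ Z ∈ poset A, Z ≠ ⊤ ∧ I ∩ principal A X = principal A Z) ∨
        ∃ Z ∈ poset A, Z ≠ ⊤ ∧ meetCompl A I ∩ principal A X = principal A Z) ∧
      ∀ X ∈ I, ∀ Y ∈ meetCompl A I, X ⊓ Y ≠ ⊥ ∧ rk (X ⊓ Y) = rk X + rk Y := by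
  have hinf : ∀ f : Fin 2 → AffineSubspace K V, Finset.univ.inf f = f 0 ⊓ f 1 := by
    simp [Fin.univ_succ]
  simp only [IsModularIdeal, IsIdealDecomposition, Fin.forall_fin_two, Fin.exists_fin_two,
    hinf, Fin.sum_univ_two, Matrix.cons_val_zero, Matrix.cons_val_one, Matrix.cons_val_fin_one,
    and_assoc]
  refine and_congr_right' (and_congr_right' (and_congr_right' ⟨fun h X hX Y hY => ?_,
    fun h => ⟨fun f hf => (h _ hf.1 _ hf.2).1, fun f hf => (h _ hf.1 _ hf.2).2⟩⟩))
  exact ⟨h.1 ![X, Y] ⟨hX, hY⟩, h.2 ![X, Y] ⟨hX, hY⟩⟩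

lemma isIdeal_meetCompl (A I : Finset (AffineSubspace K V)) : IsIdeal A (meetCompl A I) := by
  refine ⟨Finset.filter_subset _ _, fun Y hY Y' hY' hYY' => Finset.mem_filter.2 ⟨hY', ?_⟩⟩
  exact fun X hX => top_le_iff.1 ((Finset.mem_filter.1 hY).2 X hX ▸ lmeet_mono_right hYY')

lemma mem_meetCompl_iff [FiniteDimensional K V] (hA : IsArrangement A) :
    Y ∈ meetCompl A I ↔ Y ∈ poset A ∧ ∀ X ∈ I, ∀ H ∈ A, X ≤ H → ¬Y ≤ H := by
  simp only [meetCompl, Finset.mem_filter, lmeet_eq_top_iff hA]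

end ModularIdeal

section ModularDirection

variable {A B S : Finset (AffineSubspace K V)} {X Y : AffineSubspace K V} {W : Submodule K V}

def IsModularDirection (A : Finset (AffineSubspace K V)) (W : Submodule K V) : Prop :=
  ∀ Y ∈ poset A, (∀ H ∈ A, W ≤ H.direction → ¬Y ≤ H) → W ⊔ Y.direction = ⊤

lemma lmeet_atInfinity_cone_eq_top_iff [FiniteDimensional K V] (hA : IsArrangement A) (hY : Y ≠ ⊥) :
    lmeet (coneArr A) (atInfinity W) (cone Y) = ⊤ ↔ ∀ H ∈ A, W ≤ H.direction → ¬Y ≤ H := by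
  rw [lmeet_eq_top_iff (isArrangement_coneArr hA), coneArr, Finset.forall_mem_insert,
    Finset.forall_mem_image, ← atInfinity_top]
  refine (and_iff_right fun _ => not_cone_le_atInfinity hY).trans (forall₂_congr fun H hH => ?_)
  rw [atInfinity_le_cone_iff (hA.ne_bot hH), cone_le_cone_iff hY (hA.ne_bot hH)]

lemma rk_atInfinity_inf_cone_eq_add_iff [FiniteDimensional K V] (hY : Y ≠ ⊥) :
    rk (atInfinity W ⊓ cone Y) = rk (atInfinity W) + rk (cone Y) ↔ W ⊔ Y.direction = ⊤ := by
  rw [atInfinity_inf_cone hY, rk_atInfinity, rk_atInfinity, rk_cone hY, rk_eq_codim,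
    ← codim_inf_eq_add_iff]
  omega

lemma IsModularElement.isModularDirection [FiniteDimensional K V] (hA : IsArrangement A)
    (h : IsModularElement (coneArr A) (atInfinity W)) : IsModularDirection A W := by
  intro Y hY hW
  have hYb := ne_bot_of_mem_poset hY
  have := h.2 (cone Y) (cone_mem_poset_coneArr hY)
  rw [(lmeet_atInfinity_cone_eq_top_iff hA hYb).2 hW, rk_top] at this
  exact (rk_atInfinity_inf_cone_eq_add_iff hYb).1 (by omega)

lemma IsModularDirection.isModularElement_atInfinity [FiniteDimensional K V] (hA : IsArrangement A)
    (hS : S ⊆ A) (h : IsModularDirection A (dirInf S)) :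
    IsModularElement (coneArr A) (atInfinity (dirInf S)) := by
  have hcA := isArrangement_coneArr hA
  refine isModularElement_of_rk_inf_eq_add hcA (isCentral_coneArr A)
    (atInfinity_mem_poset_coneArr hA hS) fun Y' hY' htop => ?_
  rcases mem_poset_coneArr_cases hA hY' with ⟨Y, hY, rfl⟩ | ⟨T, -, rfl⟩
  · have hYb := ne_bot_of_mem_poset hY
    exact (rk_atInfinity_inf_cone_eq_add_iff hYb).2
      (h Y hY ((lmeet_atInfinity_cone_eq_top_iff hA hYb).1 htop))
  · refine absurd ((lmeet_eq_top_iff hcA).1 htop (addHyp K V) (Finset.mem_insert_self _ _)) ?_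
    rw [← atInfinity_top, atInfinity_le_atInfinity, atInfinity_le_atInfinity]
    exact fun h' => h' le_top le_top

lemma IsModularSub.isModularDirection [FiniteDimensional K V] (hA : IsArrangement A)
    (hB : IsModularSub A B) : IsModularDirection A (dirInf B) := by
  intro Y hY hYB
  obtain ⟨X, hX, hdir⟩ := exists_direction_eq_dirInf (hA.subset hB.1)
  have hYc : Y ∈ meetCompl A (poset B) := (mem_meetCompl_iff hA).2 ⟨hY, fun X' hX' H hH hXH =>
    hYB H hH ((dirInf_le_direction hX').trans (AffineSubspace.direction_le hXH))⟩
  obtain ⟨hne, hrk⟩ := (isModularIdeal_iff.1 hB.2).2.2.2 X hX Y hYc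
  exact hdir ▸ (rk_inf_eq_add_iff hne).1 hrk

/-- The hyperplanes `H` with `atInfinity W ≤ cone H`. -/
noncomputable def dirLocalization (A : Finset (AffineSubspace K V)) (W : Submodule K V) :
    Finset (AffineSubspace K V) :=
  A.filter (W ≤ ·.direction)

lemma dirLocalization_subset : dirLocalization A W ⊆ A :=
  Finset.filter_subset _ _

lemma le_direction_of_mem_poset_dirLocalization (hX : X ∈ poset (dirLocalization A W)) :
    W ≤ X.direction :=
  (Finset.le_inf fun _ hH => (Finset.mem_filter.1 hH).2).trans (dirInf_le_direction hX)

lemma dirInf_dirLocalization (hS : S ⊆ A) : dirInf (dirLocalization A (dirInf S)) = dirInf S :=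
  le_antisymm (Finset.inf_mono fun _ hH => Finset.mem_filter.2 ⟨hS hH, Finset.inf_le hH⟩)
    (Finset.le_inf fun _ hH => (Finset.mem_filter.1 hH).2)

lemma mem_poset_dirLocalization_of_le (hX : X ∈ poset (dirLocalization A W))
    (hY : Y ∈ poset A) (hXY : X ≤ Y) : Y ∈ poset (dirLocalization A W) := by
  rw [← inf_filter_le_eq hY]
  refine finset_inf_mem_poset (fun H hH => ?_) ((inf_filter_le_eq hY).symm ▸ ne_bot_of_mem_poset hY)
  obtain ⟨hHA, hYH⟩ := Finset.mem_filter.1 hH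
  exact Finset.mem_filter.2 ⟨hHA, (le_direction_of_mem_poset_dirLocalization hX).trans
    (AffineSubspace.direction_le (hXY.trans hYH))⟩

lemma inf_filter_le_of_mem_poset (hY : Y ∈ poset B) (hXY : X ≤ Y) :
    (B.filter (X ≤ ·)).inf id ≤ Y := by
  obtain ⟨⟨T, hT, rfl⟩, -⟩ := mem_poset_iff.1 hY
  exact Finset.inf_mono fun H hH => Finset.mem_filter.2 ⟨hT hH, hXY.trans (Finset.inf_le hH)⟩

lemma mem_meetCompl_poset_dirLocalization_iff [FiniteDimensional K V] (hA : IsArrangement A) :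
    Y ∈ meetCompl A (poset (dirLocalization A W)) ↔
      Y ∈ poset A ∧ ∀ H ∈ A, W ≤ H.direction → ¬Y ≤ H := by
  rw [mem_meetCompl_iff hA]
  refine and_congr_right fun _ => ⟨fun h H hH hWH => ?_, fun h X hX H hH hXH => ?_⟩
  · have hHB : H ∈ dirLocalization A W := Finset.mem_filter.2 ⟨hH, hWH⟩
    exact h H ((hA.subset dirLocalization_subset).mem_poset hHB) H hH le_rfl
  · exact h H hH ((le_direction_of_mem_poset_dirLocalization hX).trans
      (AffineSubspace.direction_le hXH))

/-- Condition (I1) for `B = dirLocalization A W`: if `X` lies in a hyperplane of `B`, the flats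
of `B` containing `X` are those containing the intersection of these hyperplanes; otherwise every
flat containing `X` is in `L(B)ᶜ`. -/
lemma exists_principal_dirLocalization [FiniteDimensional K V] (hA : IsArrangement A)
    (hX : X ∈ poset A) (hne : X ≠ ⊤) :
    (∃ Z ∈ poset A, Z ≠ ⊤ ∧
      poset (dirLocalization A W) ∩ principal A X = principal A Z) ∨
    ∃ Z ∈ poset A, Z ≠ ⊤ ∧
      meetCompl A (poset (dirLocalization A W)) ∩ principal A X = principal A Z := by
  set B := dirLocalization A W
  by_cases hXB : ∃ H ∈ B, X ≤ H
  · obtain ⟨H, hHB, hXH⟩ := hXB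
    set Z := (B.filter (X ≤ ·)).inf id
    have hXZ : X ≤ Z := Finset.le_inf fun _ h => (Finset.mem_filter.1 h).2
    have hZ : Z ∈ poset B := finset_inf_mem_poset (Finset.filter_subset _ _)
      fun h => ne_bot_of_mem_poset hX (le_bot_iff.1 (h ▸ hXZ))
    have hZH : Z ≤ H := Finset.inf_le (Finset.mem_filter.2 ⟨hHB, hXH⟩)
    refine Or.inl ⟨Z, poset_mono dirLocalization_subset hZ,
      fun h => hA.ne_top (Finset.mem_filter.1 hHB).1 (top_le_iff.1 (h ▸ hZH)), ?_⟩
    ext Y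
    simp only [principal, Finset.mem_inter, Finset.mem_filter]
    exact ⟨fun ⟨hYB, hYA, hXY⟩ => ⟨hYA, inf_filter_le_of_mem_poset hYB hXY⟩,
      fun ⟨hYA, hZY⟩ => ⟨mem_poset_dirLocalization_of_le hZ hYA hZY, hYA, hXZ.trans hZY⟩⟩
  simp only [not_exists, not_and] at hXB
  refine Or.inr ⟨X, hX, hne, ?_⟩
  ext Y
  rw [Finset.mem_inter, mem_meetCompl_poset_dirLocalization_iff hA]
  simp only [principal, Finset.mem_filter]
  exact ⟨fun h => h.2, fun ⟨hYA, hXY⟩ => ⟨⟨hYA, fun H hH hWH hYH =>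
    hXB H (Finset.mem_filter.2 ⟨hH, hWH⟩) (hXY.trans hYH)⟩, hYA, hXY⟩⟩

lemma IsModularDirection.isModularSub_dirLocalization [FiniteDimensional K V] (hA : IsArrangement A)
    (h : IsModularDirection A W) : IsModularSub A (dirLocalization A W) := by
  refine ⟨dirLocalization_subset, isModularIdeal_iff.2 ⟨⟨poset_mono dirLocalization_subset,
    fun _ hX _ hY hXY => mem_poset_dirLocalization_of_le hX hY hXY⟩, isIdeal_meetCompl _ _,
    fun _ hX hne => exists_principal_dirLocalization hA hX hne, fun X hX Y hY => ?_⟩⟩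
  rw [mem_meetCompl_poset_dirLocalization_iff hA] at hY
  have hsup : X.direction ⊔ Y.direction = ⊤ := top_le_iff.1
    (h Y hY.1 hY.2 ▸ sup_le_sup_right (le_direction_of_mem_poset_dirLocalization hX) _)
  have hne := inf_ne_bot_of_direction_sup_eq_top
    (ne_bot_of_mem_poset (poset_mono dirLocalization_subset hX)) (ne_bot_of_mem_poset hY.1) hsup
  exact ⟨hne, (rk_inf_eq_add_iff hne).2 hsup⟩

end ModularDirection

section Flag

variable [FiniteDimensional K V] {A : Finset (AffineSubspace K V)}
  {U : Fin (rank A + 1) → Submodule K V}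

/-- Both chains in the theorem amount to such a flag: `cᵢ₊₁ = atInfinity (U i)` and
`Aᵢ = dirLocalization A (U i)`. -/
def IsModularFlag (A : Finset (AffineSubspace K V)) (U : Fin (rank A + 1) → Submodule K V) :
    Prop :=
  Antitone U ∧ ∀ i, (∃ S ⊆ A, dirInf S = U i) ∧ codim (U i) = i ∧ IsModularDirection A (U i)

/-- Since `c 1 = K`, all later members of the chain lie in `K`, so they are flats at infinity. -/
lemma exists_isModularFlag_of_coneChain (hA : IsArrangement A)
    (c : Fin (rank A + 1 + 1) → AffineSubspace K (V × K))
    (hmod : ∀ i, IsModularElement (coneArr A) (c i)) (hrk : ∀ i, rk (c i) = i)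
    (hanti : Antitone c) (hK : ∃ i, c i = addHyp K V) : ∃ U, IsModularFlag A U := by
  obtain ⟨i₀, hi₀⟩ := hK
  have hi₀1 : (i₀ : ℕ) = 1 := by rw [← hrk i₀, hi₀, rk_addHyp]
  have hle : ∀ i : Fin (rank A + 1), c i.succ ≤ addHyp K V := fun i =>
    hi₀ ▸ hanti (Fin.le_def.2 (by simp [hi₀1]))
  choose S hSA hcS using fun i => exists_eq_atInfinity_of_le_addHyp hA (hmod i.succ).1 (hle i)
  refine ⟨fun i => dirInf (S i), fun i j hij => ?_, fun i => ⟨⟨S i, hSA i, rfl⟩, ?_, ?_⟩⟩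
  · rw [← atInfinity_le_atInfinity, ← hcS, ← hcS]
    exact hanti (Fin.succ_le_succ_iff.2 hij)
  · have := hrk i.succ
    show codim (dirInf (S i)) = i
    rw [hcS, rk_atInfinity, Fin.val_succ] at this
    omega
  · exact (hcS i ▸ hmod i.succ).isModularDirection hA

lemma exists_isModularFlag_of_modularSubChain (hA : IsArrangement A)
    (B : Fin (rank A + 1) → Finset (AffineSubspace K V)) (hmono : ∀ i j, i < j → B i ⊂ B j)
    (hmod : ∀ i, IsModularSub A (B i)) (hrk : ∀ i, rank (B i) = i) :
    ∃ U, IsModularFlag A U := by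
  refine ⟨fun i => dirInf (B i), fun i j hij => Finset.inf_mono ?_,
    fun i => ⟨⟨B i, (hmod i).1, rfl⟩, ?_, (hmod i).isModularDirection hA⟩⟩
  · rcases hij.lt_or_eq with h | rfl
    · exact (hmono i j h).subset
    · exact subset_rfl
  · rw [← rank_eq_codim_dirInf (hA.subset (hmod i).1), hrk]

lemma IsModularFlag.exists_coneChain (hA : IsArrangement A) (hU : IsModularFlag A U) :
    ∃ c : Fin (rank A + 1 + 1) → AffineSubspace K (V × K),
      (∀ i, c i ∈ poset (coneArr A)) ∧ (∀ i, IsModularElement (coneArr A) (c i)) ∧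
      (∀ i, rk (c i) = (i : ℕ)) ∧ (∀ i j, i ≤ j → c j ≤ c i) ∧ ∃ i, c i = addHyp K V := by
  obtain ⟨hanti, hU⟩ := hU
  set c : Fin (rank A + 1 + 1) → AffineSubspace K (V × K) := Fin.cons ⊤ fun i => atInfinity (U i)
  have hmod : ∀ i, IsModularElement (coneArr A) (c i) := by
    refine Fin.forall_fin_succ.2 ⟨isModularElement_top _, fun i => ?_⟩
    obtain ⟨⟨S, hSA, hSU⟩, -, hmodU⟩ := hU i
    simpa [c, ← hSU] using (hSU ▸ hmodU).isModularElement_atInfinity hA hSA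
  have hU0 : U 0 = ⊤ := codim_eq_zero_iff.1 (hU 0).2.1
  refine ⟨c, fun i => (hmod i).1, hmod, Fin.forall_fin_succ.2 ⟨rk_top, fun i => ?_⟩,
    fun i j hij => Fin.antitone_cons_top (fun _ _ h => atInfinity_le_atInfinity.2 (hanti h)) hij,
    1, ?_⟩
  · simp [c, rk_atInfinity, (hU i).2.1]
  · simpa [c, hU0] using atInfinity_top

lemma IsModularFlag.exists_modularSubChain (hA : IsArrangement A) (hU : IsModularFlag A U) :
    ∃ B : Fin (rank A + 1) → Finset (AffineSubspace K V),
      B 0 = ∅ ∧ B (Fin.last (rank A)) = A ∧ (∀ i j, i < j → B i ⊂ B j) ∧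
      (∀ i, IsModularSub A (B i)) ∧ ∀ i, (poset (B i)).sup rk = (i : ℕ) := by
  obtain ⟨hanti, hU⟩ := hU
  have hdir : ∀ i, dirInf (dirLocalization A (U i)) = U i := fun i => by
    obtain ⟨S, hSA, hSU⟩ := (hU i).1
    rw [← hSU, dirInf_dirLocalization hSA]
  have hrk : ∀ i, rank (dirLocalization A (U i)) = i := fun i => by
    rw [rank_eq_codim_dirInf (hA.subset dirLocalization_subset), hdir, (hU i).2.1]
  have hlast : dirInf A = U (Fin.last _) := by
    obtain ⟨S, hSA, hSU⟩ := (hU (Fin.last _)).1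
    refine eq_of_le_of_codim_eq (hSU ▸ Finset.inf_mono hSA) ?_
    rw [← rank_eq_codim_dirInf hA, (hU _).2.1, Fin.val_last]
  refine ⟨fun i => dirLocalization A (U i), ?_, ?_, fun i j hij => ?_,
    fun i => (hU i).2.2.isModularSub_dirLocalization hA, hrk⟩
  · dsimp only
    rw [codim_eq_zero_iff.1 (hU 0).2.1]
    exact Finset.filter_false_of_mem fun H hH h => hA.direction_ne_top hH (top_le_iff.1 h)
  · exact Finset.filter_true_of_mem fun H hH => hlast ▸ Finset.inf_le hH
  refine Finset.ssubset_iff_subset_ne.2 ⟨fun H hH => ?_, fun h => hij.ne (Fin.ext ?_)⟩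
  · obtain ⟨hHA, hUH⟩ := Finset.mem_filter.1 hH
    exact Finset.mem_filter.2 ⟨hHA, (hanti hij.le).trans hUH⟩
  · rw [← hrk i, ← hrk j]
    exact congrArg rank h

end Flag

end HypArr

namespace HypArr

/-- **Theorem.** The cone `cA` is supersolvable with a maximal modular chain passing
through the additional hyperplane `K` if and only if `A` admits a maximal saturated
chain of modular subarrangements `∅ = A_0 ⊊ A_1 ⊊ ⋯ ⊊ A_r = A` with
`r(L(A_i)) = i`, where `r = r(A)`.  (A chain in `L(cA)` is written in the
reverse-inclusion order: `i ≤ j → c j ⊆ c i`, with `r(c i) = i`.) -/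
theorem cone_supersolvable_iff_chain_modularSubs
    {K V : Type*} [Field K] [AddCommGroup V] [Module K V] [FiniteDimensional K V]
    (A : Finset (AffineSubspace K V)) (hA : IsArrangement A) :
    (∃ c : Fin (rank (coneArr A) + 1) → AffineSubspace K (V × K),
        (∀ i, c i ∈ poset (coneArr A)) ∧
        (∀ i, IsModularElement (coneArr A) (c i)) ∧
        (∀ i, rk (c i) = (i : ℕ)) ∧
        (∀ i j, i ≤ j → c j ≤ c i) ∧
        (∃ i, c i = addHyp K V)) ↔
    (∃ B : Fin (rank A + 1) → Finset (AffineSubspace K V),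
        B 0 = ∅ ∧ B (Fin.last (rank A)) = A ∧
        (∀ i j, i < j → B i ⊂ B j) ∧
        (∀ i, IsModularSub A (B i)) ∧
        (∀ i, (poset (B i)).sup rk = (i : ℕ))) := by
  rw [rank_coneArr hA]
  constructor
  · rintro ⟨c, -, hmod, hrk, hanti, hK⟩
    obtain ⟨U, hU⟩ :=
      exists_isModularFlag_of_coneChain hA c hmod hrk (fun i j h => hanti i j h) hK
    exact hU.exists_modularSubChain hA
  · rintro ⟨B, -, -, hmono, hmod, hrk⟩
    obtain ⟨U, hU⟩ := exists_isModularFlag_of_modularSubChain hA B hmono hmod hrk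
    exact hU.exists_coneChain hA

end HypArr
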